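/- arXiv:2208.09309 — 2 statements merged into one kernel-verified Lean document; each statement's English description precedes it below -/
import Mathlib

section
/- For a two-layer linear sheaf convolutional network with identity activation, the neural tangent kernel simplifies to Θ̄(F,F') = Σ_{l=1}^{L+1} D^l X X'ᵀ (D'ᵀ)^l ⊙ (D D'ᵀ)^{⊙(L+1−l)}, where ⊙ denotes the Hadamard product and A^{⊙k} the Hadamard power; in particular each summand is a positive semidefinite matrix when F = F' (so D = D', X = X'). -/
/-! Each summand is a Hadamard product of the Gram matrix of the rows of `D ^ l * X` with a
Hadamard power of the Gram matrix `D * Dᵀ`, so the Schur product theorem applies. -/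

open Matrix Finset

open scoped Matrix in
/-- The neural tangent kernel of a linear (identity-activation) sheaf convolutional
network of depth `L`. -/
noncomputable def linearSheafNTK {N d : ℕ}
    (D D' : Matrix (Fin N) (Fin N) ℝ) (X X' : Matrix (Fin N) (Fin d) ℝ) (L : ℕ) :
    Matrix (Fin N) (Fin N) ℝ :=
  ∑ l ∈ Finset.Icc 1 (L + 1),
    (D ^ l * X * X'ᵀ * (D'ᵀ) ^ l) ⊙ (Matrix.of fun i j => ((D * D'ᵀ) i j) ^ (L + 1 - l))

section HadamardPow

open scoped ComplexOrder

lemma Matrix.posSemidef_of_fun_one {ι 𝕜 : Type*} [Finite ι] [RCLike 𝕜] :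
    (Matrix.of fun (_ _ : ι) => (1 : 𝕜)).PosSemidef := by
  simpa [vecMulVec] using posSemidef_vecMulVec_self_star (1 : ι → 𝕜)

lemma Matrix.PosSemidef.hadamard_pow {ι 𝕜 : Type*} [Finite ι] [RCLike 𝕜] {A : Matrix ι ι 𝕜}
    (hA : A.PosSemidef) (k : ℕ) : (Matrix.of fun i j => A i j ^ k).PosSemidef := by
  induction k with
  | zero => simpa using Matrix.posSemidef_of_fun_one
  | succ k ih =>
    convert hA.hadamard ih using 1
    ext i j
    simp [pow_succ']

end HadamardPow

lemma Matrix.posSemidef_self_mul_transpose {m n : Type*} [Finite m] [Fintype n]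
    (A : Matrix m n ℝ) : (A * Aᵀ).PosSemidef := by
  simpa using posSemidef_self_mul_conjTranspose A

open scoped Matrix in
/-- For a linear sheaf convolutional network with identity activation, the NTK
simplifies to `Θ̄(F,F') = Σ_{l=1}^{L+1} D^l X X'ᵀ (D'ᵀ)^l ⊙ (D D'ᵀ)^{⊙(L+1-l)}`
(`⊙` the Hadamard product, `(·)^{⊙k}` the Hadamard power); in particular, each
summand is positive semidefinite when `F = F'` (so `D = D'`, `X = X'`). -/
theorem linearSheafNTK_eq_sum_and_summands_posSemidef {N d : ℕ}
    (D D' : Matrix (Fin N) (Fin N) ℝ) (X X' : Matrix (Fin N) (Fin d) ℝ) (L : ℕ) :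
    linearSheafNTK D D' X X' L =
      ∑ l ∈ Finset.Icc 1 (L + 1),
        (D ^ l * X * X'ᵀ * (D'ᵀ) ^ l) ⊙
          (Matrix.of fun i j => ((D * D'ᵀ) i j) ^ (L + 1 - l)) ∧
    ∀ l ∈ Finset.Icc 1 (L + 1),
      ((D ^ l * X * Xᵀ * (Dᵀ) ^ l) ⊙
          (Matrix.of fun i j => ((D * Dᵀ) i j) ^ (L + 1 - l))).PosSemidef := by
  refine ⟨rfl, fun l _ => ?_⟩
  have hGram : D ^ l * X * Xᵀ * Dᵀ ^ l = (D ^ l * X) * (D ^ l * X)ᵀ := by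
    simp [Matrix.mul_assoc, transpose_pow]
  rw [hGram]
  exact (posSemidef_self_mul_transpose _).hadamard
    ((posSemidef_self_mul_transpose D).hadamard_pow _)
end

section
/- For a graph G with stationary distribution π (of the lazy random walk) and Cheeger constant h(G) > 0, the spectral gap λ of the normalized Laplacian satisfies h(G)²/2 ≤ λ ≤ 2h(G) (Cheeger's inequality). -/
open Matrix Finset

variable {V : Type*} [Fintype V] [DecidableEq V]

/-- The number of edges from `S` to its complement. -/
def edgeBoundary (G : SimpleGraph V) [DecidableRel G.Adj] (S : Finset V) : ℕ :=
  ∑ u ∈ S, ∑ v ∈ Sᶜ, if G.Adj u v then 1 else 0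

/-- The volume of a vertex subset: the sum of its degrees. -/
def volume (G : SimpleGraph V) [DecidableRel G.Adj] (S : Finset V) : ℕ :=
  ∑ u ∈ S, G.degree u

/-- The Cheeger constant `h(G) = min_S |∂S| / min(vol S, vol Sᶜ)` over nonempty proper
vertex subsets `S`. -/
noncomputable def cheegerConst (G : SimpleGraph V) [DecidableRel G.Adj] : ℝ :=
  sInf {r : ℝ | ∃ S : Finset V, S.Nonempty ∧ S ≠ Finset.univ ∧
    r = (edgeBoundary G S : ℝ) / min (volume G S : ℝ) (volume G Sᶜ : ℝ)}

/-!
Writing `L = D - A` for the combinatorial Laplacian, the normalized Laplacian is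
`D^{-1/2} L D^{-1/2}`, so its eigenvectors `x` correspond to solutions `f = D^{-1/2} x` of
`L f = λ D f`, and on a connected graph its kernel is spanned by `D^{1/2} 𝟙`.

Upper bound: `λ` bounds the Rayleigh quotient `⟨c, L c⟩ / ⟨c, D c⟩` from below on all `c` with
`∑ d_v c_v = 0`. For `c = vol(Sᶜ) 𝟙_S - vol(S) 𝟙_{Sᶜ}` the quotient is
`|∂S| (1 / vol S + 1 / vol Sᶜ) ≤ 2 |∂S| / min (vol S) (vol Sᶜ)`.

Lower bound: an eigenfunction `f` satisfies `∑ d_v f_v = 0`, so it takes both signs; up to sign,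
`{f > 0}` has at most half the volume. Its positive part `g = f⁺` still has `⟨g, L g⟩ ≤ λ ⟨g, D g⟩`.
Every level set `{g² > t}` with `t ≥ 0` lies in `{f > 0}`, so `h · vol {g² > t} ≤ |∂{g² > t}|`, and
integrating over `t` gives `h ⟨g, D g⟩ ≤ ∑_{u ~ v} (g_u² - g_v²)⁺`. Cauchy–Schwarz bounds the
right-hand side by `√(2 ⟨g, L g⟩ ⟨g, D g⟩) ≤ √(2 λ) ⟨g, D g⟩`.
-/

namespace Matrix.IsHermitian

variable {n : Type*} [Fintype n] [DecidableEq n] {A : Matrix n n ℝ}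

theorem dotProduct_eq_sum_dotProduct_eigenvectorBasis (hA : A.IsHermitian) (x y : n → ℝ) :
    x ⬝ᵥ y = ∑ i, (hA.eigenvectorBasis i ⬝ᵥ x) * (hA.eigenvectorBasis i ⬝ᵥ y) := by
  have := hA.eigenvectorBasis.sum_inner_mul_inner (WithLp.toLp 2 y) (WithLp.toLp 2 x)
  simp only [EuclideanSpace.inner_eq_star_dotProduct, star_trivial] at this
  rw [← this]
  refine Finset.sum_congr rfl fun i _ => ?_
  rw [dotProduct_comm x, mul_comm]

theorem eigenvectorBasis_dotProduct_mulVec (hA : A.IsHermitian) (i : n) (y : n → ℝ) :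
    hA.eigenvectorBasis i ⬝ᵥ (A *ᵥ y) = hA.eigenvalues i * (hA.eigenvectorBasis i ⬝ᵥ y) := by
  have hT : Aᵀ = A := by simpa [conjTranspose_eq_transpose_of_trivial] using hA.eq
  rw [dotProduct_comm, ← vecMul_transpose, hT, ← dotProduct_mulVec, dotProduct_comm,
    mulVec_eigenvectorBasis, smul_dotProduct, smul_eq_mul]

theorem mul_dotProduct_self_le_dotProduct_mulVec (hA : A.IsHermitian) {lam : ℝ}
    (hmin : ∀ (μ : ℝ) (x : n → ℝ), x ≠ 0 → A *ᵥ x = μ • x → μ ≠ 0 → lam ≤ μ) {y : n → ℝ}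
    (hy : ∀ x, A *ᵥ x = 0 → x ⬝ᵥ y = 0) :
    lam * (y ⬝ᵥ y) ≤ y ⬝ᵥ (A *ᵥ y) := by
  simp only [hA.dotProduct_eq_sum_dotProduct_eigenvectorBasis y, Finset.mul_sum,
    hA.eigenvectorBasis_dotProduct_mulVec]
  refine Finset.sum_le_sum fun i _ => ?_
  have hb := hA.mulVec_eigenvectorBasis i
  by_cases hμ : hA.eigenvalues i = 0
  · rw [hμ, zero_smul] at hb
    simp [hy _ hb]
  · have hb0 : (hA.eigenvectorBasis i : n → ℝ) ≠ 0 := fun h =>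
      hA.eigenvectorBasis.orthonormal.ne_zero i (by ext v; exact congrFun h v)
    have := mul_le_mul_of_nonneg_right (hmin _ _ hb0 hb hμ)
      (mul_self_nonneg (hA.eigenvectorBasis i ⬝ᵥ y))
    linarith

end Matrix.IsHermitian

theorem integrable_indicator_Ico_const (a b e : ℝ) :
    MeasureTheory.Integrable ((Set.Ico a b).indicator fun _ => e) :=
  (MeasureTheory.integrableOn_const (by simp) (by simp)).integrable_indicator measurableSet_Ico

theorem integral_indicator_Ico_const (a b e : ℝ) :
    ∫ t, (Set.Ico a b).indicator (fun _ => e) t = (b - a)⁺ * e := by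
  rw [MeasureTheory.integral_indicator_const _ measurableSet_Ico, Real.volume_real_Ico,
    smul_eq_mul]
  rfl

namespace SimpleGraph

variable (G : SimpleGraph V) [DecidableRel G.Adj]

omit [DecidableEq V] in
theorem sum_adj_comm (F : V → V → ℝ) :
    ∑ u, ∑ v, (if G.Adj u v then F u v else 0) = ∑ u, ∑ v, (if G.Adj u v then F v u else 0) := by
  rw [Finset.sum_comm]
  exact Finset.sum_congr rfl fun u _ => Finset.sum_congr rfl fun v _ =>
    if_congr (G.adj_comm v u) rfl rfl

theorem sum_lapMatrix_mulVec_eq_zero (x : V → ℝ) : ∑ v, (G.lapMatrix ℝ *ᵥ x) v = 0 := by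
  have hL : (G.lapMatrix ℝ)ᵀ = G.lapMatrix ℝ := G.isSymm_lapMatrix ℝ
  rw [← one_dotProduct, dotProduct_mulVec, ← hL, vecMul_transpose,
    show (1 : V → ℝ) = fun _ => 1 from rfl, G.lapMatrix_mulVec_const_eq_zero, zero_dotProduct]

theorem two_mul_dotProduct_lapMatrix_mulVec (g : V → ℝ) :
    2 * (g ⬝ᵥ (G.lapMatrix ℝ *ᵥ g)) = ∑ u, ∑ v, if G.Adj u v then (g u - g v) ^ 2 else 0 := by
  rw [← toLinearMap₂'_apply', lapMatrix_toLinearMap₂']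
  ring

omit [DecidableEq V] in
theorem volume_cast (S : Finset V) : (volume G S : ℝ) = ∑ v ∈ S, (G.degree v : ℝ) := by
  simp [volume]

omit [DecidableEq V] in
theorem volume_mono {S T : Finset V} (h : S ⊆ T) : volume G S ≤ volume G T :=
  Finset.sum_le_sum_of_subset h

omit [DecidableEq V] in
theorem volume_pos (hd : ∀ v, 0 < G.degree v) {S : Finset V} (hS : S.Nonempty) :
    0 < volume G S :=
  Finset.sum_pos (fun v _ => hd v) hS

theorem volume_add_volume_compl (S : Finset V) :
    volume G S + volume G Sᶜ = volume G Finset.univ :=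
  Finset.sum_add_sum_compl S _

theorem volume_add_volume_le_of_disjoint {S T : Finset V} (h : Disjoint S T) :
    volume G S + volume G T ≤ volume G Finset.univ :=
  (Finset.sum_union h).symm.trans_le (G.volume_mono (Finset.subset_univ _))

theorem edgeBoundary_cast (S : Finset V) :
    (edgeBoundary G S : ℝ) = ∑ u ∈ S, ∑ v ∈ Sᶜ, if G.Adj u v then 1 else 0 := by
  simp [edgeBoundary]

theorem lapMatrix_mulVec_indicator_of_mem {S : Finset V} {u : V} (hu : u ∈ S) :
    (G.lapMatrix ℝ *ᵥ fun v => if v ∈ S then 1 else 0) u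
      = ∑ v ∈ Sᶜ, if G.Adj u v then 1 else 0 := by
  have hN : ∑ v ∈ G.neighborFinset u, (if v ∈ S then (1 : ℝ) else 0)
      = ∑ v ∈ S, if G.Adj u v then 1 else 0 := by
    rw [Finset.sum_ite_mem, ← Finset.sum_filter]
    congr 1
    ext v
    simp [and_comm]
  rw [lapMatrix_mulVec_apply, G.degree_eq_sum_if_adj, ← Finset.sum_add_sum_compl S, hN]
  simp [hu]

theorem indicator_dotProduct_lapMatrix_mulVec_indicator (S : Finset V) :
    (fun v => if v ∈ S then (1 : ℝ) else 0) ⬝ᵥ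
      (G.lapMatrix ℝ *ᵥ fun v => if v ∈ S then 1 else 0) = edgeBoundary G S := by
  rw [edgeBoundary_cast, dotProduct]
  simp only [ite_mul, one_mul, zero_mul, Finset.sum_ite_mem, Finset.univ_inter]
  exact Finset.sum_congr rfl fun u hu => G.lapMatrix_mulVec_indicator_of_mem hu

theorem cheegerConst_nonneg : 0 ≤ cheegerConst G :=
  Real.sInf_nonneg fun _ ⟨_, _, _, hr⟩ => hr ▸ by positivity

theorem cheegerConst_le {S : Finset V} (hS : S.Nonempty) (hSu : S ≠ Finset.univ) :
    cheegerConst G ≤ edgeBoundary G S / min (volume G S : ℝ) (volume G Sᶜ) :=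
  csInf_le ⟨0, fun _ ⟨_, _, _, hr⟩ => hr ▸ by positivity⟩ ⟨S, hS, hSu, rfl⟩

theorem cheegerConst_mul_min_volume_le (S : Finset V) :
    cheegerConst G * min (volume G S : ℝ) (volume G Sᶜ) ≤ edgeBoundary G S := by
  rcases (le_min (Nat.cast_nonneg _) (Nat.cast_nonneg _) :
    (0 : ℝ) ≤ min (volume G S : ℝ) (volume G Sᶜ)).eq_or_lt with h0 | hpos
  · rw [← h0, mul_zero]
    positivity
  · have hS : S.Nonempty := Finset.nonempty_of_sum_ne_zero
      (by exact_mod_cast (lt_min_iff.mp hpos).1.ne' : volume G S ≠ 0)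
    have hSc : Sᶜ.Nonempty := Finset.nonempty_of_sum_ne_zero
      (by exact_mod_cast (lt_min_iff.mp hpos).2.ne' : volume G Sᶜ ≠ 0)
    exact (le_div_iff₀ hpos).mp (G.cheegerConst_le hS fun h => by simp [h] at hSc)

theorem cheegerConst_mul_volume_le_of_subset {S P : Finset V} (hSP : S ⊆ P)
    (hP : 2 * volume G P ≤ volume G Finset.univ) :
    cheegerConst G * volume G S ≤ edgeBoundary G S := by
  have hvol : volume G S ≤ volume G Sᶜ := by
    have := G.volume_add_volume_compl S
    have := G.volume_mono hSP
    omega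
  have := G.cheegerConst_mul_min_volume_le S
  rwa [min_eq_left (Nat.cast_le.mpr hvol)] at this

theorem le_cheegerConst [Nontrivial V] {c : ℝ}
    (h : ∀ S : Finset V, S.Nonempty → S ≠ Finset.univ →
      c ≤ edgeBoundary G S / min (volume G S : ℝ) (volume G Sᶜ)) :
    c ≤ cheegerConst G :=
  le_csInf ⟨_, {Classical.arbitrary V}, Finset.singleton_nonempty _,
    Finset.singleton_ne_univ _, rfl⟩ fun _ ⟨S, hS, hSu, hr⟩ => hr ▸ h S hS hSu

noncomputable def invSqrtDegMatrix : Matrix V V ℝ := diagonal fun v => (√(G.degree v : ℝ))⁻¹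

theorem one_sub_adjMatrix_div_sqrt_eq_invSqrtDegMatrix_mul (hd : ∀ v, 0 < G.degree v) :
    (1 - of fun u v => G.adjMatrix ℝ u v / √((G.degree u : ℝ) * G.degree v)) =
      G.invSqrtDegMatrix * G.lapMatrix ℝ * G.invSqrtDegMatrix := by
  ext u v
  have hu : (0 : ℝ) < G.degree u := by exact_mod_cast hd u
  simp only [invSqrtDegMatrix, diagonal_mul, mul_diagonal, lapMatrix, degMatrix,
    Matrix.sub_apply, diagonal_apply, one_apply, of_apply, adjMatrix_apply, Real.sqrt_mul hu.le]
  rcases eq_or_ne u v with rfl | huv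
  · field_simp
    simp
  · simp only [huv, if_false]
    split_ifs <;> field_simp <;> ring

theorem invSqrtDegMatrix_mulVec_apply (x : V → ℝ) (v : V) :
    (G.invSqrtDegMatrix *ᵥ x) v = x v / √(G.degree v : ℝ) := by
  simp [invSqrtDegMatrix, mulVec_diagonal, div_eq_inv_mul]

theorem invSqrtDegMatrix_mulVec_ne_zero (hd : ∀ v, 0 < G.degree v) {x : V → ℝ} (hx : x ≠ 0) :
    G.invSqrtDegMatrix *ᵥ x ≠ 0 := fun h => hx <| funext fun v => by
  have hv := congrFun h v
  rw [invSqrtDegMatrix_mulVec_apply, Pi.zero_apply, div_eq_zero_iff] at hv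
  exact hv.resolve_right (Real.sqrt_pos.mpr (by exact_mod_cast hd v)).ne'

theorem lapMatrix_mulVec_eq_smul_degMatrix_mulVec (hd : ∀ v, 0 < G.degree v) {μ : ℝ}
    {x : V → ℝ} (hx : (G.invSqrtDegMatrix * G.lapMatrix ℝ * G.invSqrtDegMatrix) *ᵥ x = μ • x) :
    G.lapMatrix ℝ *ᵥ (G.invSqrtDegMatrix *ᵥ x) =
      μ • (G.degMatrix ℝ *ᵥ (G.invSqrtDegMatrix *ᵥ x)) := by
  ext v
  have hs0 : √(G.degree v : ℝ) ≠ 0 := (Real.sqrt_pos.mpr (by exact_mod_cast hd v)).ne'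
  have hv := congrFun hx v
  rw [← mulVec_mulVec, ← mulVec_mulVec, G.invSqrtDegMatrix_mulVec_apply, Pi.smul_apply,
    smul_eq_mul, div_eq_iff hs0] at hv
  rw [hv, Pi.smul_apply, degMatrix_mulVec_apply, G.invSqrtDegMatrix_mulVec_apply, smul_eq_mul,
    mul_div_left_comm, Real.div_sqrt, mul_assoc]

theorem dotProduct_sqrt_degree_mul_eq_zero (hconn : G.Connected) (hd : ∀ v, 0 < G.degree v)
    {x : V → ℝ} (hx : (G.invSqrtDegMatrix * G.lapMatrix ℝ * G.invSqrtDegMatrix) *ᵥ x = 0)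
    {c : V → ℝ} (hc : ∑ v, (G.degree v : ℝ) * c v = 0) :
    x ⬝ᵥ (fun v => √(G.degree v : ℝ) * c v) = 0 := by
  have h0 := G.lapMatrix_mulVec_eq_smul_degMatrix_mulVec hd (μ := 0)
    (hx.trans (zero_smul _ _).symm)
  rw [zero_smul, lapMatrix_mulVec_eq_zero_iff_forall_reachable] at h0
  obtain ⟨v₀⟩ := hconn.nonempty
  have hxv : ∀ v, x v * √(G.degree v : ℝ) = (G.invSqrtDegMatrix *ᵥ x) v₀ * G.degree v := by
    intro v
    rw [← h0 v v₀ (hconn.preconnected v v₀), invSqrtDegMatrix_mulVec_apply,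
      div_mul_eq_mul_div, mul_div_assoc, Real.div_sqrt]
  calc x ⬝ᵥ (fun v => √(G.degree v : ℝ) * c v)
      = (G.invSqrtDegMatrix *ᵥ x) v₀ * ∑ v, (G.degree v : ℝ) * c v := by
        simp only [dotProduct, Finset.mul_sum, ← mul_assoc, hxv]
    _ = 0 := by rw [hc, mul_zero]

theorem mul_dotProduct_degMatrix_mulVec_le (hconn : G.Connected) (hd : ∀ v, 0 < G.degree v)
    {lam : ℝ} (hmin : ∀ (μ : ℝ) (x : V → ℝ), x ≠ 0 →
      (G.invSqrtDegMatrix * G.lapMatrix ℝ * G.invSqrtDegMatrix) *ᵥ x = μ • x → μ ≠ 0 → lam ≤ μ)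
    {c : V → ℝ} (hc : ∑ v, (G.degree v : ℝ) * c v = 0) :
    lam * (c ⬝ᵥ (G.degMatrix ℝ *ᵥ c)) ≤ c ⬝ᵥ (G.lapMatrix ℝ *ᵥ c) := by
  have hd' : ∀ v, (0 : ℝ) < G.degree v := fun v => by exact_mod_cast hd v
  have hDT : G.invSqrtDegMatrixᴴ = G.invSqrtDegMatrix := by
    simp [invSqrtDegMatrix]
  have hN := isHermitian_mul_mul_conjTranspose G.invSqrtDegMatrix (G.isHermitian_lapMatrix ℝ)
  rw [hDT] at hN
  set y : V → ℝ := fun v => √(G.degree v : ℝ) * c v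
  have hy : G.invSqrtDegMatrix *ᵥ y = c := by
    ext v
    rw [invSqrtDegMatrix_mulVec_apply, mul_div_cancel_left₀ _ (Real.sqrt_pos.mpr (hd' v)).ne']
  have hyy : y ⬝ᵥ y = c ⬝ᵥ (G.degMatrix ℝ *ᵥ c) := by
    refine Finset.sum_congr rfl fun v _ => ?_
    rw [degMatrix_mulVec_apply, ← Real.mul_self_sqrt (hd' v).le]
    ring
  have hyNy : y ⬝ᵥ ((G.invSqrtDegMatrix * G.lapMatrix ℝ * G.invSqrtDegMatrix) *ᵥ y)
      = c ⬝ᵥ (G.lapMatrix ℝ *ᵥ c) := by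
    rw [← mulVec_mulVec, ← mulVec_mulVec, hy, dotProduct_mulVec, ← hDT,
      conjTranspose_eq_transpose_of_trivial, vecMul_transpose, hy]
  rw [← hyy, ← hyNy]
  exact hN.mul_dotProduct_self_le_dotProduct_mulVec hmin fun x hx =>
    G.dotProduct_sqrt_degree_mul_eq_zero hconn hd hx hc

theorem sum_degree_mul_ite_mem (S : Finset V) (p q : ℝ) :
    ∑ v, (G.degree v : ℝ) * (if v ∈ S then p else q) = volume G S * p + volume G Sᶜ * q := by
  rw [← Finset.sum_add_sum_compl S, volume_cast, volume_cast, Finset.sum_mul, Finset.sum_mul]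
  congr 1 <;> refine Finset.sum_congr rfl fun v hv => ?_
  · rw [if_pos hv]
  · rw [if_neg (Finset.mem_compl.mp hv)]

theorem ite_mem_dotProduct_degMatrix_mulVec_ite_mem (S : Finset V) (p q : ℝ) :
    (fun v => if v ∈ S then p else q) ⬝ᵥ (G.degMatrix ℝ *ᵥ fun v => if v ∈ S then p else q) =
      volume G S * p ^ 2 + volume G Sᶜ * q ^ 2 := by
  rw [← sum_degree_mul_ite_mem]
  refine Finset.sum_congr rfl fun v _ => ?_
  rw [degMatrix_mulVec_apply]
  by_cases hv : v ∈ S <;> simp [hv] <;> ring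

theorem ite_mem_dotProduct_lapMatrix_mulVec_ite_mem (S : Finset V) (p q : ℝ) :
    (fun v => if v ∈ S then p else q) ⬝ᵥ (G.lapMatrix ℝ *ᵥ fun v => if v ∈ S then p else q) =
      (p - q) ^ 2 * edgeBoundary G S := by
  set χ : V → ℝ := fun v => if v ∈ S then 1 else 0
  have hc : (fun v => if v ∈ S then p else q) = (p - q) • χ + q • fun _ => 1 := by
    ext v
    by_cases hv : v ∈ S <;> simp [χ, hv]
  have h1 : (fun _ => (1 : ℝ)) ⬝ᵥ (G.lapMatrix ℝ *ᵥ χ) = 0 := by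
    simpa [dotProduct] using G.sum_lapMatrix_mulVec_eq_zero χ
  rw [hc, mulVec_add, mulVec_smul, mulVec_smul, G.lapMatrix_mulVec_const_eq_zero, smul_zero,
    add_zero, dotProduct_smul, add_dotProduct, smul_dotProduct, smul_dotProduct, h1,
    G.indicator_dotProduct_lapMatrix_mulVec_indicator, smul_eq_mul, smul_eq_mul]
  ring

theorem le_two_mul_edgeBoundary_div {lam : ℝ}
    (hray : ∀ c : V → ℝ, ∑ v, (G.degree v : ℝ) * c v = 0 →
      lam * (c ⬝ᵥ (G.degMatrix ℝ *ᵥ c)) ≤ c ⬝ᵥ (G.lapMatrix ℝ *ᵥ c))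
    {S : Finset V} (hS : 0 < volume G S) (hSc : 0 < volume G Sᶜ) :
    lam ≤ 2 * (edgeBoundary G S / min (volume G S : ℝ) (volume G Sᶜ)) := by
  set b : ℝ := (volume G S : ℝ)
  set a : ℝ := (volume G Sᶜ : ℝ)
  set E : ℝ := (edgeBoundary G S : ℝ)
  have ha : 0 < a := Nat.cast_pos.mpr hSc
  have hb : 0 < b := Nat.cast_pos.mpr hS
  have hE : 0 ≤ E := Nat.cast_nonneg _
  have hcut := hray (fun v => if v ∈ S then a else -b) (by rw [sum_degree_mul_ite_mem]; ring)
  rw [ite_mem_dotProduct_degMatrix_mulVec_ite_mem, ite_mem_dotProduct_lapMatrix_mulVec_ite_mem,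
    sub_neg_eq_add] at hcut
  replace hcut : lam * (a * b) ≤ (a + b) * E := by nlinarith
  rw [← mul_div_assoc, le_div_iff₀ (lt_min hb ha)]
  rcases le_total b a with h | h
  · rw [min_eq_left h]
    nlinarith
  · rw [min_eq_right h]
    nlinarith

theorem sum_degree_mul_eq_zero_of_lapMatrix_mulVec_eq {lam : ℝ} (hne : lam ≠ 0) {f : V → ℝ}
    (hf : G.lapMatrix ℝ *ᵥ f = lam • (G.degMatrix ℝ *ᵥ f)) :
    ∑ v, (G.degree v : ℝ) * f v = 0 := by
  have := G.sum_lapMatrix_mulVec_eq_zero f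
  simp only [hf, Pi.smul_apply, degMatrix_mulVec_apply, smul_eq_mul, ← Finset.mul_sum] at this
  exact (mul_eq_zero.mp this).resolve_left hne

omit [DecidableEq V] in
theorem exists_pos_of_sum_degree_mul_eq_zero (hd : ∀ v, 0 < G.degree v) {f : V → ℝ}
    (hf0 : f ≠ 0) (hf : ∑ v, (G.degree v : ℝ) * f v = 0) : ∃ v, 0 < f v := by
  have hd' : ∀ v, (0 : ℝ) < G.degree v := fun v => by exact_mod_cast hd v
  by_contra! hle
  refine hf0 (funext fun v => ?_)
  have := (Finset.sum_eq_zero_iff_of_nonpos fun v _ =>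
    mul_nonpos_of_nonneg_of_nonpos (hd' v).le (hle v)).mp hf v (Finset.mem_univ v)
  exact (mul_eq_zero.mp this).resolve_left (hd' v).ne'

theorem posPart_dotProduct_lapMatrix_mulVec_le (f : V → ℝ) :
    f⁺ ⬝ᵥ (G.lapMatrix ℝ *ᵥ f⁺) ≤ f⁺ ⬝ᵥ (G.lapMatrix ℝ *ᵥ f) := by
  refine Finset.sum_le_sum fun v _ => ?_
  have hN : ∑ u ∈ G.neighborFinset v, f u ≤ ∑ u ∈ G.neighborFinset v, f⁺ u :=
    Finset.sum_le_sum fun u _ => le_posPart (f u)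
  simp only [lapMatrix_mulVec_apply, Pi.posPart_apply] at hN ⊢
  rcases le_total (f v) 0 with hv | hv
  · simp [posPart_eq_zero.mpr hv]
  · rw [posPart_eq_self.mpr hv]
    exact mul_le_mul_of_nonneg_left (by linarith) hv

omit [DecidableEq V] in
theorem volume_filter_lt_eq_sum_indicator (φ : V → ℝ) {t : ℝ} (ht : 0 ≤ t) :
    (volume G {v | t < φ v} : ℝ) =
      ∑ v, (Set.Ico 0 (φ v)).indicator (fun _ => (G.degree v : ℝ)) t := by
  rw [volume_cast, Finset.sum_filter]
  exact Finset.sum_congr rfl fun v _ => by simp [Set.indicator_apply, ht]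

theorem edgeBoundary_filter_lt_eq_sum_indicator (φ : V → ℝ) (t : ℝ) :
    (edgeBoundary G {v | t < φ v} : ℝ) =
      ∑ u, ∑ v, (Set.Ico (φ v) (φ u)).indicator (fun _ => if G.Adj u v then 1 else 0) t := by
  rw [edgeBoundary_cast, Finset.sum_filter, Finset.compl_filter]
  refine Finset.sum_congr rfl fun u _ => ?_
  rw [Finset.sum_filter]
  by_cases hu : t < φ u
  · refine (if_pos hu).trans (Finset.sum_congr rfl fun v _ => ?_)
    by_cases hv : t < φ v <;> simp [hu, hv, Set.indicator_apply]
  · refine (if_neg hu).trans (Finset.sum_eq_zero fun v _ => ?_).symm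
    simp [hu]

theorem mul_sum_degree_le_sum_adj_posPart_sub {φ : V → ℝ} (hφ : ∀ v, 0 ≤ φ v) {c : ℝ}
    (h : ∀ t : ℝ, 0 ≤ t → c * volume G {v | t < φ v} ≤ edgeBoundary G {v | t < φ v}) :
    c * ∑ v, (G.degree v : ℝ) * φ v ≤
      ∑ u, ∑ v, if G.Adj u v then (φ u - φ v)⁺ else 0 := by
  -- On `t ≥ 0` these are `vol {φ > t}` and `|∂{φ > t}|`, as step functions integrable termwise.
  set F : ℝ → ℝ := fun t => ∑ v, (Set.Ico 0 (φ v)).indicator (fun _ => (G.degree v : ℝ)) t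
  set E : ℝ → ℝ := fun t => ∑ u, ∑ v,
    (Set.Ico (φ v) (φ u)).indicator (fun _ => if G.Adj u v then (1 : ℝ) else 0) t
  have hFint : MeasureTheory.Integrable F :=
    MeasureTheory.integrable_finsetSum _ fun v _ => integrable_indicator_Ico_const _ _ _
  have hEint : MeasureTheory.Integrable E :=
    MeasureTheory.integrable_finsetSum _ fun u _ =>
      MeasureTheory.integrable_finsetSum _ fun v _ => integrable_indicator_Ico_const _ _ _
  have hF : ∫ t, F t = ∑ v, (G.degree v : ℝ) * φ v := by
    rw [MeasureTheory.integral_finsetSum _ fun v _ => integrable_indicator_Ico_const _ _ _]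
    refine Finset.sum_congr rfl fun v _ => ?_
    rw [integral_indicator_Ico_const, sub_zero, posPart_eq_self.mpr (hφ v), mul_comm]
  have hE : ∫ t, E t = ∑ u, ∑ v, if G.Adj u v then (φ u - φ v)⁺ else 0 := by
    rw [MeasureTheory.integral_finsetSum _ fun u _ => MeasureTheory.integrable_finsetSum _
      fun v _ => integrable_indicator_Ico_const _ _ _]
    refine Finset.sum_congr rfl fun u _ => ?_
    rw [MeasureTheory.integral_finsetSum _ fun v _ => integrable_indicator_Ico_const _ _ _]
    refine Finset.sum_congr rfl fun v _ => ?_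
    rw [integral_indicator_Ico_const]
    split_ifs <;> simp
  have hpt : ∀ t, c * F t ≤ E t := by
    intro t
    rcases le_or_gt 0 t with ht | ht
    · have := h t ht
      rwa [G.volume_filter_lt_eq_sum_indicator φ ht,
        G.edgeBoundary_filter_lt_eq_sum_indicator] at this
    · have hF0 : F t = 0 := Finset.sum_eq_zero fun v _ => by simp [ht.not_ge]
      have hE0 : E t = 0 := Finset.sum_eq_zero fun u _ => Finset.sum_eq_zero fun v _ => by
        simp [(ht.trans_le (hφ v)).not_ge]
      rw [hF0, hE0, mul_zero]
  rw [← hF, ← hE, ← MeasureTheory.integral_const_mul]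
  exact MeasureTheory.integral_mono (hFint.const_mul c) hEint hpt

omit [DecidableEq V] in
theorem sum_adj_abs_sub_eq_two_mul_sum_adj_posPart_sub (φ : V → ℝ) :
    ∑ u, ∑ v, (if G.Adj u v then |φ u - φ v| else 0) =
      2 * ∑ u, ∑ v, if G.Adj u v then (φ u - φ v)⁺ else 0 := by
  have hsplit : ∀ u v, (if G.Adj u v then |φ u - φ v| else 0) =
      (if G.Adj u v then (φ u - φ v)⁺ else 0) + (if G.Adj u v then (φ v - φ u)⁺ else 0) := by
    intro u v
    split_ifs
    · rw [← posPart_add_negPart, ← posPart_neg, neg_sub]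
    · rw [add_zero]
  simp only [hsplit, Finset.sum_add_distrib]
  rw [← G.sum_adj_comm fun u v => (φ u - φ v)⁺]
  ring

theorem sq_sum_adj_abs_sq_sub_sq_le (g : V → ℝ) :
    (∑ u, ∑ v, if G.Adj u v then |g u ^ 2 - g v ^ 2| else 0) ^ 2 ≤
      8 * (g ⬝ᵥ (G.lapMatrix ℝ *ᵥ g)) * (g ⬝ᵥ (G.degMatrix ℝ *ᵥ g)) := by
  set Q := g ⬝ᵥ (G.lapMatrix ℝ *ᵥ g)
  set M := g ⬝ᵥ (G.degMatrix ℝ *ᵥ g)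
  have hQ : 2 * Q = ∑ u, ∑ v, if G.Adj u v then (g u - g v) ^ 2 else 0 :=
    G.two_mul_dotProduct_lapMatrix_mulVec g
  have hA : g ⬝ᵥ (G.adjMatrix ℝ *ᵥ g) = M - Q := by
    simp only [Q, M, lapMatrix, sub_mulVec, dotProduct_sub]
    ring
  have hplus : ∑ u, ∑ v, (if G.Adj u v then (g u + g v) ^ 2 else 0) = 4 * M - 2 * Q := by
    have : ∀ u v, (if G.Adj u v then (g u + g v) ^ 2 else 0) =
        (if G.Adj u v then (g u - g v) ^ 2 else 0) + 4 * (if G.Adj u v then g u * g v else 0) := by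
      intro u v
      split_ifs <;> ring
    simp only [this, Finset.sum_add_distrib, ← Finset.mul_sum, ← hQ,
      ← dotProduct_mulVec_adjMatrix, hA]
    ring
  have hprod : ∀ u v,
      (if G.Adj u v then |g u - g v| else 0) * (if G.Adj u v then |g u + g v| else 0) =
        if G.Adj u v then |g u ^ 2 - g v ^ 2| else 0 := by
    intro u v
    split_ifs
    · rw [← abs_mul]
      ring_nf
    · rw [mul_zero]
  have hsq : ∀ (u v : V) (x : ℝ),
      (if G.Adj u v then |x| else 0) ^ 2 = if G.Adj u v then x ^ 2 else 0 := by
    intro u v x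
    split_ifs <;> simp
  have hcs := Finset.sum_mul_sq_le_sq_mul_sq Finset.univ
    (fun p : V × V => if G.Adj p.1 p.2 then |g p.1 - g p.2| else 0)
    (fun p : V × V => if G.Adj p.1 p.2 then |g p.1 + g p.2| else 0)
  simp only [Fintype.sum_prod_type, hprod, hsq, hplus, ← hQ] at hcs
  nlinarith [sq_nonneg Q]

theorem sq_cheegerConst_mul_le (g : V → ℝ)
    (hg : 2 * volume G {v | g v ≠ 0} ≤ volume G Finset.univ) :
    cheegerConst G ^ 2 * (g ⬝ᵥ (G.degMatrix ℝ *ᵥ g)) ≤ 2 * (g ⬝ᵥ (G.lapMatrix ℝ *ᵥ g)) := by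
  set h := cheegerConst G
  set M := g ⬝ᵥ (G.degMatrix ℝ *ᵥ g)
  set Q := g ⬝ᵥ (G.lapMatrix ℝ *ᵥ g)
  have hM : M = ∑ v, (G.degree v : ℝ) * g v ^ 2 := by
    simp only [M, dotProduct_mulVec_degMatrix, mul_assoc, sq]
  have hM0 : 0 ≤ M := hM ▸ Finset.sum_nonneg fun v _ => by positivity
  have hQ0 : 0 ≤ Q := by
    simpa using (G.posSemidef_lapMatrix ℝ).dotProduct_mulVec_nonneg g
  have hlevel : ∀ t : ℝ, 0 ≤ t →
      h * volume G {v | t < g v ^ 2} ≤ edgeBoundary G {v | t < g v ^ 2} := by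
    refine fun t ht => G.cheegerConst_mul_volume_le_of_subset (fun v hv => ?_) hg
    simp only [Finset.mem_filter, Finset.mem_univ, true_and] at hv ⊢
    rintro h0
    simp only [h0, ne_eq, OfNat.ofNat_ne_zero, not_false_eq_true, zero_pow] at hv
    linarith
  have hcoarea : 2 * (h * M) ≤ ∑ u, ∑ v, if G.Adj u v then |g u ^ 2 - g v ^ 2| else 0 := by
    rw [G.sum_adj_abs_sub_eq_two_mul_sum_adj_posPart_sub, hM]
    exact mul_le_mul_of_nonneg_left
      (G.mul_sum_degree_le_sum_adj_posPart_sub (fun v => sq_nonneg (g v)) hlevel) zero_le_two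
  have hCS := G.sq_sum_adj_abs_sq_sub_sq_le g
  have hhM : 0 ≤ h * M := mul_nonneg G.cheegerConst_nonneg hM0
  have hsq : h ^ 2 * M * M ≤ 2 * Q * M := by nlinarith
  rcases hM0.eq_or_lt with hM0 | hMpos
  · rw [← hM0, mul_zero]
    positivity
  · exact le_of_mul_le_mul_right hsq hMpos

theorem sq_cheegerConst_le_of_volume_le (hd : ∀ v, 0 < G.degree v) {lam : ℝ} {f : V → ℝ}
    (hf : G.lapMatrix ℝ *ᵥ f = lam • (G.degMatrix ℝ *ᵥ f)) (hpos : ∃ v, 0 < f v)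
    (hvol : 2 * volume G {v | 0 < f v} ≤ volume G Finset.univ) :
    cheegerConst G ^ 2 ≤ 2 * lam := by
  have hsupp : ({v | f⁺ v ≠ 0} : Finset V) = ({v | 0 < f v} : Finset V) := by
    ext v
    simp [Pi.posPart_apply]
  have hgf : f⁺ ⬝ᵥ (G.degMatrix ℝ *ᵥ f) = f⁺ ⬝ᵥ (G.degMatrix ℝ *ᵥ f⁺) := by
    refine Finset.sum_congr rfl fun v _ => ?_
    simp only [degMatrix_mulVec_apply, Pi.posPart_apply]
    rcases le_total (f v) 0 with hv | hv
    · simp [posPart_eq_zero.mpr hv]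
    · rw [posPart_eq_self.mpr hv]
  obtain ⟨v₀, hv₀⟩ := hpos
  have hM : 0 < f⁺ ⬝ᵥ (G.degMatrix ℝ *ᵥ f⁺) := by
    rw [dotProduct_mulVec_degMatrix]
    refine Finset.sum_pos' (fun v _ => ?_) ⟨v₀, Finset.mem_univ _, ?_⟩
    · have := posPart_nonneg (f v)
      positivity
    · have := hd v₀
      simp only [Pi.posPart_apply, posPart_eq_self.mpr hv₀.le]
      positivity
  refine le_of_mul_le_mul_right ?_ hM
  calc cheegerConst G ^ 2 * (f⁺ ⬝ᵥ (G.degMatrix ℝ *ᵥ f⁺))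
      ≤ 2 * (f⁺ ⬝ᵥ (G.lapMatrix ℝ *ᵥ f⁺)) := G.sq_cheegerConst_mul_le f⁺ (hsupp ▸ hvol)
    _ ≤ 2 * (f⁺ ⬝ᵥ (G.lapMatrix ℝ *ᵥ f)) := by
      gcongr
      exact G.posPart_dotProduct_lapMatrix_mulVec_le f
    _ = 2 * lam * (f⁺ ⬝ᵥ (G.degMatrix ℝ *ᵥ f⁺)) := by
      rw [hf, dotProduct_smul, hgf, smul_eq_mul, mul_assoc]

theorem sq_cheegerConst_le (hd : ∀ v, 0 < G.degree v) {lam : ℝ} (hne : lam ≠ 0) {f : V → ℝ}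
    (hf0 : f ≠ 0) (hf : G.lapMatrix ℝ *ᵥ f = lam • (G.degMatrix ℝ *ᵥ f)) :
    cheegerConst G ^ 2 ≤ 2 * lam := by
  have hsum := G.sum_degree_mul_eq_zero_of_lapMatrix_mulVec_eq hne hf
  have hvol := G.volume_add_volume_le_of_disjoint (S := {v | 0 < f v}) (T := {v | f v < 0})
    (Finset.disjoint_filter.mpr fun v _ h1 h2 => lt_asymm h1 h2)
  rcases le_total (volume G {v | 0 < f v}) (volume G {v | f v < 0}) with hle | hle
  · exact G.sq_cheegerConst_le_of_volume_le hd hf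
      (G.exists_pos_of_sum_degree_mul_eq_zero hd hf0 hsum) (by omega)
  · have hneg : ({v | 0 < (-f) v} : Finset V) = ({v | f v < 0} : Finset V) := by
      ext v
      simp
    exact G.sq_cheegerConst_le_of_volume_le hd (f := -f) (by simp [hf, mulVec_neg])
      (G.exists_pos_of_sum_degree_mul_eq_zero hd (neg_ne_zero.mpr hf0) (by simp [hsum]))
      (by rw [hneg]; omega)

end SimpleGraph

theorem cheeger_inequality_general (G : SimpleGraph V) [DecidableRel G.Adj] [Nontrivial V]
    (hconn : G.Connected)
    (lam : ℝ)
    (normL : Matrix V V ℝ)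
    (hnormL : normL = 1 - Matrix.of fun u v =>
      (G.adjMatrix ℝ) u v / Real.sqrt ((G.degree u : ℝ) * (G.degree v : ℝ)))
    (heig : ∃ x : V → ℝ, x ≠ 0 ∧ normL.mulVec x = lam • x)
    (hne : lam ≠ 0)
    (hmin : ∀ (μ : ℝ) (x : V → ℝ), x ≠ 0 → normL.mulVec x = μ • x → μ ≠ 0 → lam ≤ μ) :
    cheegerConst G ^ 2 / 2 ≤ lam ∧ lam ≤ 2 * cheegerConst G := by
  have hd : ∀ v, 0 < G.degree v := fun v => hconn.preconnected.degree_pos_of_nontrivial v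
  rw [G.one_sub_adjMatrix_div_sqrt_eq_invSqrtDegMatrix_mul hd] at hnormL
  subst hnormL
  obtain ⟨x, hx0, hx⟩ := heig
  constructor
  · have := G.sq_cheegerConst_le hd hne (G.invSqrtDegMatrix_mulVec_ne_zero hd hx0)
      (G.lapMatrix_mulVec_eq_smul_degMatrix_mulVec hd hx)
    linarith
  · have := G.le_cheegerConst (c := lam / 2) fun S hS hSu => by
      have hSc : Sᶜ.Nonempty := (Finset.compl_ne_univ_iff_nonempty Sᶜ).mp (by rwa [compl_compl])
      linarith [G.le_two_mul_edgeBoundary_div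
        (fun c hc => G.mul_dotProduct_degMatrix_mulVec_le hconn hd hmin hc)
        (G.volume_pos hd hS) (G.volume_pos hd hSc)]
    linarith

/-- Cheeger's inequality: for a finite connected graph `G` with positive Cheeger
constant `h(G)`, the spectral gap `λ` of the normalized Laplacian
`L̃ = I - D^{-1/2} A D^{-1/2}` (its second-smallest eigenvalue, i.e. the smallest
nonzero eigenvalue) satisfies `h(G)²/2 ≤ λ ≤ 2 h(G)`. -/
theorem cheeger_inequality (G : SimpleGraph V) [DecidableRel G.Adj] [Nontrivial V]
    (hconn : G.Connected) (hpos : 0 < cheegerConst G)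
    (lam : ℝ)
    (normL : Matrix V V ℝ)
    (hnormL : normL = 1 - Matrix.of fun u v =>
      (G.adjMatrix ℝ) u v / Real.sqrt ((G.degree u : ℝ) * (G.degree v : ℝ)))
    (heig : ∃ x : V → ℝ, x ≠ 0 ∧ normL.mulVec x = lam • x)
    (hne : lam ≠ 0)
    (hmin : ∀ (μ : ℝ) (x : V → ℝ), x ≠ 0 → normL.mulVec x = μ • x → μ ≠ 0 → lam ≤ μ) :
    cheegerConst G ^ 2 / 2 ≤ lam ∧ lam ≤ 2 * cheegerConst G :=
  cheeger_inequality_general G hconn lam normL hnormL heig hne hmin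
end
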